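/- Let h₀ > 0, 0 < P₂ < h₀², x ∈ R. For z > xh₀, the supremum over ζ ∈ R of J(z,ζ) := P₂((x - ζ/h₀)⁻)² + P₁((x - ζ/h₀)⁺)² - (ζ - z)², where 0 < P₁ ≤ h₀², equals P₂(z - xh₀)²/(h₀² - P₂), attained at ζ̂ = (h₀²z - xP₂h₀)/(h₀² - P₂); moreover ζ̂/h₀ > x so only the P₂ term is active. -/
import Mathlib


/-- Lagrange-dual computation: for `z > x h₀`,
`sup_ζ [P₂((x - ζ/h₀)⁻)² + P₁((x - ζ/h₀)⁺)² - (ζ - z)²]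
  = P₂ (z - x h₀)²/(h₀² - P₂)`, attained at
`zh = (h₀² z - x P₂ h₀)/(h₀² - P₂)`, and `zh/h₀ > x`. -/
theorem stmt_10 (h₀ P₁ P₂ x z : ℝ) (hh₀ : 0 < h₀)
    (hP₂ : 0 < P₂) (hP₂' : P₂ < h₀ ^ 2) (hP₁ : 0 < P₁) (hP₁' : P₁ ≤ h₀ ^ 2)
    (hz : x * h₀ < z) :
    IsGreatest {v : ℝ | ∃ ζ : ℝ,
        v = P₂ * (max (-(x - ζ / h₀)) 0) ^ 2 + P₁ * (max (x - ζ / h₀) 0) ^ 2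
            - (ζ - z) ^ 2}
      (P₂ * (z - x * h₀) ^ 2 / (h₀ ^ 2 - P₂)) ∧
    (P₂ * (max (-(x - ((h₀ ^ 2 * z - x * P₂ * h₀) / (h₀ ^ 2 - P₂)) / h₀)) 0) ^ 2
        + P₁ * (max (x - ((h₀ ^ 2 * z - x * P₂ * h₀) / (h₀ ^ 2 - P₂)) / h₀) 0) ^ 2
        - (((h₀ ^ 2 * z - x * P₂ * h₀) / (h₀ ^ 2 - P₂)) - z) ^ 2
      = P₂ * (z - x * h₀) ^ 2 / (h₀ ^ 2 - P₂)) ∧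
    x < ((h₀ ^ 2 * z - x * P₂ * h₀) / (h₀ ^ 2 - P₂)) / h₀ := by
  have hD : (0:ℝ) < h₀ ^ 2 - P₂ := by linarith
  have hD' : h₀ ^ 2 - P₂ ≠ 0 := ne_of_gt hD
  have hh : h₀ ≠ 0 := ne_of_gt hh₀
  have hw : (0:ℝ) < z - x * h₀ := by linarith
  set zh : ℝ := (h₀ ^ 2 * z - x * P₂ * h₀) / (h₀ ^ 2 - P₂) with hζ
  have key : zh / h₀ - x = h₀ * (z - x * h₀) / (h₀ ^ 2 - P₂) := by
    rw [hζ]; field_simp; ring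
  have key2 : zh - z = P₂ * (z - x * h₀) / (h₀ ^ 2 - P₂) := by
    rw [hζ]; field_simp; ring
  have hpos : 0 < h₀ * (z - x * h₀) / (h₀ ^ 2 - P₂) := by positivity
  have hxlt : x < zh / h₀ := by linarith
  have m1 : max (-(x - zh / h₀)) 0 = h₀ * (z - x * h₀) / (h₀ ^ 2 - P₂) := by
    rw [max_eq_left (by linarith)]; linarith
  have m2 : max (x - zh / h₀) 0 = 0 := max_eq_right (by linarith)
  have heq : P₂ * (max (-(x - zh / h₀)) 0) ^ 2
        + P₁ * (max (x - zh / h₀) 0) ^ 2 - (zh - z) ^ 2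
      = P₂ * (z - x * h₀) ^ 2 / (h₀ ^ 2 - P₂) := by
    rw [m1, m2, key2]
    field_simp
    ring
  refine ⟨⟨⟨zh, heq.symm⟩, ?_⟩, heq, hxlt⟩
  rintro v ⟨ζ, rfl⟩
  obtain ⟨t, rfl⟩ : ∃ t : ℝ, ζ = t * h₀ := ⟨ζ / h₀, (div_mul_cancel₀ ζ hh).symm⟩
  rw [mul_div_cancel_right₀ t hh]
  rcases le_total (x - t) 0 with h | h
  · rw [max_eq_right h, max_eq_left (by linarith)]
    rw [le_div_iff₀ hD]
    nlinarith [sq_nonneg ((h₀ ^ 2 - P₂) * (t - x) - h₀ * (z - x * h₀))]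
  · rw [max_eq_right (by linarith), max_eq_left h]
    have hR : 0 ≤ P₂ * (z - x * h₀) ^ 2 / (h₀ ^ 2 - P₂) := by positivity
    have hth : t * h₀ ≤ x * h₀ := by nlinarith
    have h1 : 0 ≤ (z - x * h₀) * (z + x * h₀ - 2 * (t * h₀)) := by nlinarith
    nlinarith [mul_le_mul_of_nonneg_right hP₁' (sq_nonneg (x - t)), sq_nonneg (x - t)]
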